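/- arXiv:2004.09330 — 2 statements merged into one kernel-verified Lean document; each statement's English description precedes it below -/
import Mathlib

section
/- Let X be a normed vector space and f : X → ℝ ∪ {+∞} be a convex proper function. If f is bounded above on some nonempty open subset U of X, then f is continuous (indeed locally Lipschitz) at every point of the interior of its domain. -/
/-!
Off `⊤` the function `f` is a real-valued convex function on the convex set `dom f`, and `U`,
on which `f ≤ M`, lies in the interior of `dom f`. A real convex function on an open convex
set that is bounded above near one of its points is locally Lipschitz on that set
(`ConvexOn.continuousOn_tfae`), which gives both conclusions at every interior point of the
domain.
-/

open scoped Topology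

/-- Convexity for extended-real-valued functions. -/
def EConvexOn {E : Type*} [AddCommGroup E] [Module ℝ E] (f : E → EReal) : Prop :=
  ∀ x y : E, ∀ t : ℝ, 0 ≤ t → t ≤ 1 →
    f (t • x + (1 - t) • y) ≤ (t : EReal) * f x + ((1 - t : ℝ) : EReal) * f y

section Module

variable {E : Type*} [AddCommGroup E] [Module ℝ E] {f : E → EReal}

theorem EConvexOn.le_coe_combo (hf : EConvexOn f) {x y : E} {u v : ℝ} (hx : f x = u)
    (hy : f y = v) {a b : ℝ} (ha : 0 ≤ a) (hb : 0 ≤ b) (hab : a + b = 1) :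
    f (a • x + b • y) ≤ ((a * u + b * v : ℝ) : EReal) := by
  obtain rfl : b = 1 - a := by linarith
  calc f (a • x + (1 - a) • y) ≤ (a : EReal) * f x + ((1 - a : ℝ) : EReal) * f y :=
        hf x y a ha (by linarith)
    _ = ((a * u + (1 - a) * v : ℝ) : EReal) := by rw [hx, hy]; norm_cast

theorem EConvexOn.convexOn_toReal (hf : EConvexOn f) (hbot : ∀ x, f x ≠ ⊥) :
    ConvexOn ℝ {x | f x ≠ ⊤} fun x ↦ (f x).toReal := by
  have hcoe {x : E} (hx : f x ≠ ⊤) : f x = (f x).toReal := (EReal.coe_toReal hx (hbot x)).symm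
  refine ⟨fun x hx y hy a b ha hb hab ↦ ?_, fun x hx y hy a b ha hb hab ↦ ?_⟩
  · exact ne_top_of_le_ne_top (EReal.coe_ne_top _) (hf.le_coe_combo (hcoe hx) (hcoe hy) ha hb hab)
  · exact (EReal.toReal_le_toReal (hf.le_coe_combo (hcoe hx) (hcoe hy) ha hb hab)
      (hbot _) (EReal.coe_ne_top _)).trans_eq (EReal.toReal_coe _)

end Module

theorem EConvexOn.locallyLipschitzOn_toReal_interior {X : Type*} [NormedAddCommGroup X]
    [NormedSpace ℝ X] {f : X → EReal} (hf : EConvexOn f) (hbot : ∀ x, f x ≠ ⊥) {U : Set X}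
    (hU : IsOpen U) (hUne : U.Nonempty) {M : ℝ} (hM : ∀ x ∈ U, f x ≤ M) :
    LocallyLipschitzOn (interior {x | f x ≠ ⊤}) fun x ↦ (f x).toReal := by
  obtain ⟨x₁, hx₁⟩ := hUne
  have hUdom : U ⊆ interior {x | f x ≠ ⊤} :=
    hU.subset_interior_iff.2 fun x hx ↦ ne_top_of_le_ne_top (EReal.coe_ne_top M) (hM x hx)
  have hconv := hf.convexOn_toReal hbot
  have hconvD := hconv.subset interior_subset hconv.1.interior
  have hbdd : (𝓝 x₁).IsBoundedUnder (· ≤ ·) fun x ↦ (f x).toReal :=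
    ⟨M, Filter.eventually_map.2 <| Filter.mem_of_superset (hU.mem_nhds hx₁) fun x hx ↦
      (EReal.toReal_le_toReal (hM x hx) (hbot x) (EReal.coe_ne_top M)).trans_eq
        (EReal.toReal_coe M)⟩
  have htfae := (hconvD.continuousOn_tfae isOpen_interior ⟨x₁, hUdom hx₁⟩).out 3 0
  exact htfae.1 ⟨x₁, hUdom hx₁, hbdd⟩

theorem convex_bounded_above_implies_locally_lipschitz_on_interior_dom_general
    {X : Type*} [NormedAddCommGroup X] [NormedSpace ℝ X]
    (f : X → EReal) (hconv : EConvexOn f)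
    (hnotbot : ∀ x, f x ≠ ⊥)
    (U : Set X) (hUopen : IsOpen U) (hUne : U.Nonempty)
    (M : ℝ) (hbd : ∀ x ∈ U, f x ≤ (M : EReal)) :
    ∀ x₀ ∈ interior {x | f x ≠ ⊤},
      ContinuousAt f x₀ ∧
      ∃ V ∈ 𝓝 x₀, ∃ K : ℝ, 0 ≤ K ∧
        ∀ x ∈ V, ∀ y ∈ V, f x ≤ f y + ((K * ‖x - y‖ : ℝ) : EReal) := by
  intro x₀ hx₀
  set D := interior {x | f x ≠ ⊤}
  have hlip := hconv.locallyLipschitzOn_toReal_interior hnotbot hUopen hUne hbd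
  have hfD : ∀ x ∈ D, f x = (f x).toReal := fun x hx ↦
    (EReal.coe_toReal (interior_subset hx) (hnotbot x)).symm
  have hD : D ∈ 𝓝 x₀ := isOpen_interior.mem_nhds hx₀
  obtain ⟨K, t, ht, hK⟩ := hlip hx₀
  rw [isOpen_interior.nhdsWithin_eq hx₀] at ht
  refine ⟨?_, t ∩ D, Filter.inter_mem ht hD, K, K.2, fun x hx y hy ↦ ?_⟩
  · exact (continuous_coe_real_ereal.continuousAt.comp (hlip.continuousOn.continuousAt hD)).congr
      (Filter.eventually_of_mem hD fun x hx ↦ (hfD x hx).symm)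
  · rw [hfD x hx.2, hfD y hy.2, ← EReal.coe_add, EReal.coe_le_coe_iff, ← dist_eq_norm]
    exact hK.le_add_mul hx.1 hy.1

theorem convex_bounded_above_implies_locally_lipschitz_on_interior_dom
    {X : Type*} [NormedAddCommGroup X] [NormedSpace ℝ X]
    (f : X → EReal) (hconv : EConvexOn f)
    (hnotbot : ∀ x, f x ≠ ⊥) (hproper : ∃ x, f x ≠ ⊤)
    (U : Set X) (hUopen : IsOpen U) (hUne : U.Nonempty)
    (M : ℝ) (hbd : ∀ x ∈ U, f x ≤ (M : EReal)) :
    ∀ x₀ ∈ interior {x | f x ≠ ⊤},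
      ContinuousAt f x₀ ∧
      ∃ V ∈ 𝓝 x₀, ∃ K : ℝ, 0 ≤ K ∧
        ∀ x ∈ V, ∀ y ∈ V, f x ≤ f y + ((K * ‖x - y‖ : ℝ) : EReal) :=
  convex_bounded_above_implies_locally_lipschitz_on_interior_dom_general f hconv hnotbot U hUopen
    hUne M hbd
end

section
/- Let f, g₁, …, g_m : X → ℝ be convex functions on a normed space X, and suppose the Slater condition holds: there exists x₀ with f continuous at x₀ and g_j(x₀) < 0 for all j. Then a point x̄ with g_j(x̄) ≤ 0 for all j is optimal for the problem inf{ f(x) : g_j(x) ≤ 0, j = 1..m } if and only if there exist Lagrange multipliers λ̄₁, …, λ̄_m ≥ 0 such that x̄ minimizes f + Σ_j λ̄_j g_j over X and λ̄_j g_j(x̄) = 0 for every j. -/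
/-!
Optimality of `xbar` means that no `x` makes `f x - f xbar` and all `g j x` negative at once. The
points of `ℝ^(1+m)` dominating some `(f x - f xbar, g x)` then form a convex set missing the open
negative orthant, and a separating hyperplane yields Fritz John multipliers `μ₀, μ ≥ 0`, not all
zero, with `μ₀ (f x - f xbar) + ∑ μ_j g_j x ≥ 0` for all `x`. At a Slater point this forces
`μ₀ ≠ 0`; dividing by `μ₀` gives the Lagrange multipliers, and evaluating at `xbar` gives
complementary slackness. The converse is weak duality.
-/

open Set

theorem nonpos_of_forall_pos_mul_le {𝕜 : Type*} [Field 𝕜] [LinearOrder 𝕜] [IsStrictOrderedRing 𝕜]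
    {a u : 𝕜} (h : ∀ t > 0, t * a ≤ u) : a ≤ 0 := by
  by_contra! ha
  have := h ((|u| + 1) / a) (by positivity)
  rw [div_mul_cancel₀ _ ha.ne'] at this
  linarith [le_abs_self u]

theorem Convex.exists_nonneg_ne_zero_dotProduct_nonneg {ι : Type*} [Fintype ι]
    {C : Set (ι → ℝ)} (hC : Convex ℝ C) (hne : C.Nonempty) (hdisj : ∀ y ∈ C, ∃ i, 0 ≤ y i) :
    ∃ μ : ι → ℝ, 0 ≤ μ ∧ μ ≠ 0 ∧ ∀ y ∈ C, 0 ≤ μ ⬝ᵥ y := by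
  classical
  set O : Set (ι → ℝ) := univ.pi fun _ => Iio 0
  have hdisj' : Disjoint O C := disjoint_left.2 fun y hyO hyC => by
    obtain ⟨i, hi⟩ := hdisj y hyC
    exact hi.not_gt (hyO i (mem_univ i))
  obtain ⟨φ, u, hφO, hφC⟩ := geometric_hahn_banach_open
    (convex_pi fun _ _ => convex_Iio 0) (isOpen_set_pi finite_univ fun _ _ => isOpen_Iio) hC hdisj'
  set μ := (dotProductEquiv ℝ ι).symm φ.toLinearMap
  have hφμ : ∀ y, φ y = μ ⬝ᵥ y := fun y =>
    (LinearMap.congr_fun ((dotProductEquiv ℝ ι).apply_symm_apply φ.toLinearMap) y).symm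
  have hφ_le : ∀ y ≤ 0, φ y ≤ u := by
    have hcl : closure O = Iic 0 := by
      ext y; simp [O, closure_pi_set, Pi.le_def]
    intro y hy
    refine closure_minimal (fun z hz => (hφO z hz).le)
      (isClosed_le φ.continuous continuous_const) ?_
    rwa [hcl]
  have hu : 0 ≤ u := by simpa using hφ_le 0 le_rfl
  refine ⟨μ, fun i => ?_, fun hμ => ?_, fun y hy => hu.trans ((hφμ y) ▸ hφC y hy)⟩
  · -- `φ` is bounded above on the cone `Iic 0`, hence nonpositive there.
    have := nonpos_of_forall_pos_mul_le (a := -μ i) (u := u) fun t ht => by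
      have := hφ_le (Pi.single i (-t)) (Pi.single_nonpos.2 (by linarith))
      rwa [hφμ, dotProduct_single, mul_comm, neg_mul, ← mul_neg] at this
    exact neg_nonpos.1 this
  · obtain ⟨y, hy⟩ := hne
    have h1 := hφO (fun _ => -1) (by simp)
    have h2 := hφC y hy
    simp only [hφμ, hμ, zero_dotProduct] at h1 h2
    linarith

theorem ConvexOn.exists_nonneg_ne_zero_sum_mul_nonneg {E ι : Type*} [AddCommGroup E] [Module ℝ E]
    [Fintype ι] {s : Set E} {h : ι → E → ℝ} (hh : ∀ i, ConvexOn ℝ s (h i)) (hs : s.Nonempty)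
    (hno : ∀ x ∈ s, ∃ i, 0 ≤ h i x) :
    ∃ μ : ι → ℝ, 0 ≤ μ ∧ μ ≠ 0 ∧ ∀ x ∈ s, 0 ≤ ∑ i, μ i * h i x := by
  set C : Set (ι → ℝ) := {y | ∃ x ∈ s, ∀ i, h i x ≤ y i}
  have hC : Convex ℝ C := by
    rintro y ⟨x, hx, hxy⟩ z ⟨x', hx', hx'z⟩ a b ha hb hab
    obtain ⟨i₀, -⟩ := hno x hx
    refine ⟨a • x + b • x', (hh i₀).1 hx hx' ha hb hab, fun i => ?_⟩
    calc h i (a • x + b • x') ≤ a • h i x + b • h i x' := (hh i).2 hx hx' ha hb hab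
      _ ≤ a • y i + b • z i := by gcongr; exacts [hxy i, hx'z i]
  obtain ⟨x, hx⟩ := hs
  obtain ⟨μ, hμ, hμ0, hμC⟩ := hC.exists_nonneg_ne_zero_dotProduct_nonneg ⟨_, x, hx, fun _ => le_rfl⟩
    fun y ⟨x, hx, hxy⟩ => (hno x hx).imp fun i hi => hi.trans (hxy i)
  exact ⟨μ, hμ, hμ0, fun x hx => hμC _ ⟨x, hx, fun _ => le_rfl⟩⟩

theorem mul_eq_zero_of_sum_mul_nonneg {ι : Type*} [Fintype ι] {μ a : ι → ℝ} (hμ : 0 ≤ μ)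
    (ha : ∀ i, a i ≤ 0) (h : 0 ≤ ∑ i, μ i * a i) (i : ι) : μ i * a i = 0 := by
  have hterm : ∀ i ∈ Finset.univ, μ i * a i ≤ 0 := fun i _ =>
    mul_nonpos_of_nonneg_of_nonpos (hμ i) (ha i)
  exact (Finset.sum_eq_zero_iff_of_nonpos hterm).1 (h.antisymm' (Finset.sum_nonpos hterm)) i
    (Finset.mem_univ i)

section ConvexProgram

variable {X ι : Type*} [Fintype ι] {f : X → ℝ} {g : ι → X → ℝ} {xbar : X}

theorem le_of_lagrangian_le {lam : ι → ℝ} {x : X} (hlam : ∀ j, 0 ≤ lam j)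
    (hmin : f xbar + ∑ j, lam j * g j xbar ≤ f x + ∑ j, lam j * g j x)
    (hcs : ∀ j, lam j * g j xbar = 0) (hx : ∀ j, g j x ≤ 0) : f xbar ≤ f x := by
  have hxbar : ∑ j, lam j * g j xbar = 0 := Finset.sum_eq_zero fun j _ => hcs j
  have hx' : ∑ j, lam j * g j x ≤ 0 :=
    Finset.sum_nonpos fun j _ => mul_nonpos_of_nonneg_of_nonpos (hlam j) (hx j)
  linarith

theorem exists_fritzJohn_multipliers [AddCommGroup X] [Module ℝ X] {s : Set X}
    (hf : ConvexOn ℝ s f) (hg : ∀ j, ConvexOn ℝ s (g j)) (hxbar : xbar ∈ s)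
    (hopt : ∀ x ∈ s, (∀ j, g j x ≤ 0) → f xbar ≤ f x) :
    ∃ μ₀ : ℝ, ∃ μ : ι → ℝ, 0 ≤ μ₀ ∧ 0 ≤ μ ∧ (μ₀ ≠ 0 ∨ μ ≠ 0) ∧
      ∀ x ∈ s, μ₀ * f xbar ≤ μ₀ * f x + ∑ j, μ j * g j x := by
  classical
  let h : Option ι → X → ℝ := fun i => i.elim (fun x => f x - f xbar) g
  have hh : ∀ i, ConvexOn ℝ s (h i) := fun
    | none => hf.add_const _
    | some j => hg j
  obtain ⟨μ, hμ, hμ0, hμs⟩ := ConvexOn.exists_nonneg_ne_zero_sum_mul_nonneg hh ⟨xbar, hxbar⟩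
    fun x hx => by
      by_contra! hneg
      have := hopt x hx fun j => (hneg (some j)).le
      linarith [show f x - f xbar < 0 from hneg none]
  refine ⟨μ none, fun j => μ (some j), hμ none, fun j => hμ (some j), ?_, fun x hx => ?_⟩
  · contrapose! hμ0
    funext i
    cases i with
    | none => exact hμ0.1
    | some j => exact congr_fun hμ0.2 j
  · have := hμs x hx
    simp only [Fintype.sum_option, h, Option.elim] at this
    linarith

theorem fritzJohn_ne_zero_of_slater {μ₀ : ℝ} {μ : ι → ℝ} {x₀ : X} (hμ : 0 ≤ μ)
    (hne : μ₀ ≠ 0 ∨ μ ≠ 0) (hslater : ∀ j, g j x₀ < 0)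
    (hFJ : μ₀ * f xbar ≤ μ₀ * f x₀ + ∑ j, μ j * g j x₀) : μ₀ ≠ 0 := by
  rintro rfl
  have hsum : 0 ≤ ∑ j, μ j * g j x₀ := by simpa using hFJ
  refine hne.resolve_left (not_not.2 rfl) (funext fun j => ?_)
  have hterm := mul_eq_zero_of_sum_mul_nonneg hμ (fun k => (hslater k).le) hsum j
  exact (mul_eq_zero.1 hterm).resolve_right (hslater j).ne

theorem exists_kkt_multipliers_of_fritzJohn {s : Set X} {μ₀ : ℝ} {μ : ι → ℝ} (hμ₀ : 0 < μ₀)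
    (hμ : 0 ≤ μ) (hfeas : ∀ j, g j xbar ≤ 0) (hxbar : xbar ∈ s)
    (hFJ : ∀ x ∈ s, μ₀ * f xbar ≤ μ₀ * f x + ∑ j, μ j * g j x) :
    ∃ lam : ι → ℝ, (∀ j, 0 ≤ lam j) ∧
      (∀ x ∈ s, f xbar + ∑ j, lam j * g j xbar ≤ f x + ∑ j, lam j * g j x) ∧
      ∀ j, lam j * g j xbar = 0 := by
  set lam := μ₀⁻¹ • μ
  have hlam : 0 ≤ lam := smul_nonneg (inv_nonneg.2 hμ₀.le) hμ
  have hmin : ∀ x ∈ s, f xbar ≤ f x + ∑ j, lam j * g j x := fun x hx => by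
    have hsum : ∑ j, lam j * g j x = μ₀⁻¹ * ∑ j, μ j * g j x := by
      simp only [lam, Pi.smul_apply, smul_eq_mul, Finset.mul_sum, mul_assoc]
    refine le_of_mul_le_mul_left ?_ hμ₀
    rw [hsum, mul_add, mul_inv_cancel_left₀ hμ₀.ne']
    exact hFJ x hx
  have hcs : ∀ j, lam j * g j xbar = 0 :=
    mul_eq_zero_of_sum_mul_nonneg hlam hfeas (by linarith [hmin xbar hxbar])
  refine ⟨lam, hlam, fun x hx => ?_, hcs⟩
  rw [Finset.sum_eq_zero fun j _ => hcs j, add_zero]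
  exact hmin x hx

end ConvexProgram

theorem kkt_of_slater_general {X : Type*} [NormedAddCommGroup X] [NormedSpace ℝ X]
    (m : ℕ) (f : X → ℝ) (g : Fin m → X → ℝ)
    (hf : ConvexOn ℝ Set.univ f) (hg : ∀ j, ConvexOn ℝ Set.univ (g j))
    (x₀ : X) (hslater : ContinuousAt f x₀ ∧ ∀ j, g j x₀ < 0)
    (xbar : X) (hfeas : ∀ j, g j xbar ≤ 0) :
    (∀ x : X, (∀ j, g j x ≤ 0) → f xbar ≤ f x) ↔
      ∃ lam : Fin m → ℝ, (∀ j, 0 ≤ lam j) ∧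
        (∀ x : X, f xbar + ∑ j, lam j * g j xbar ≤ f x + ∑ j, lam j * g j x) ∧
        (∀ j, lam j * g j xbar = 0) := by
  refine ⟨fun hopt => ?_, fun ⟨lam, hlam, hmin, hcs⟩ x hx =>
    le_of_lagrangian_le hlam (hmin x) hcs hx⟩
  obtain ⟨μ₀, μ, hμ₀, hμ, hne, hFJ⟩ :=
    exists_fritzJohn_multipliers hf hg (mem_univ xbar) fun x _ => hopt x
  have hμ₀_pos : 0 < μ₀ :=
    hμ₀.lt_of_ne' (fritzJohn_ne_zero_of_slater hμ hne hslater.2 (hFJ x₀ (mem_univ x₀)))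
  obtain ⟨lam, hlam, hmin, hcs⟩ :=
    exists_kkt_multipliers_of_fritzJohn hμ₀_pos hμ hfeas (mem_univ xbar) hFJ
  exact ⟨lam, hlam, fun x => hmin x (mem_univ x), hcs⟩

theorem kkt_of_slater {X : Type*} [NormedAddCommGroup X] [NormedSpace ℝ X]
    (m : ℕ) (f : X → ℝ) (g : Fin m → X → ℝ)
    (hf : ConvexOn ℝ Set.univ f) (hg : ∀ j, ConvexOn ℝ Set.univ (g j))
    (hflsc : LowerSemicontinuous f) (hglsc : ∀ j, LowerSemicontinuous (g j))
    (x₀ : X) (hslater : ContinuousAt f x₀ ∧ ∀ j, g j x₀ < 0)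
    (xbar : X) (hfeas : ∀ j, g j xbar ≤ 0) :
    (∀ x : X, (∀ j, g j x ≤ 0) → f xbar ≤ f x) ↔
      ∃ lam : Fin m → ℝ, (∀ j, 0 ≤ lam j) ∧
        (∀ x : X, f xbar + ∑ j, lam j * g j xbar ≤ f x + ∑ j, lam j * g j x) ∧
        (∀ j, lam j * g j xbar = 0) :=
  kkt_of_slater_general m f g hf hg x₀ hslater xbar hfeas
end
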